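/- Let (L_0, L_1) be an adaptive tester for the order A≺B, i.e. L_0, L_1 are positive semidefinite operators on A_I⊗A_O⊗B_I⊗B_O with tr_{B_O}(L_0 + L_1) = 1_{B_I} ⊗ J for some positive semidefinite J on A_I⊗A_O with tr_{A_O}(J) = 1_{A_I}. Define S_i := tr_{B_O}(L_i) ⊗ (1_{B_O}/dim B_O) for i = 0, 1. Then S_0 and S_1 are positive semidefinite, S_0 + S_1 ∈ NS, and for every operator of the form W = W' ⊗ 1_{B_O} with W' an operator on A_I⊗A_O⊗B_I one has tr(S_i W) = tr(tr_{B_O}(L_i) · W') for i = 0, 1. -/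

import Mathlib

open scoped ComplexOrder Matrix

namespace ProcessMatrices

/-- The trace norm (sum of singular values) of a complex square matrix. -/
noncomputable def traceNorm {n : Type} [Fintype n] [DecidableEq n] (X : Matrix n n ℂ) : ℝ :=
  ∑ i, Real.sqrt ((Matrix.posSemidef_conjTranspose_mul_self X).isHermitian.eigenvalues i)

variable {aI aO bI bO : Type} [Fintype aI] [Fintype aO] [Fintype bI] [Fintype bO]
  [DecidableEq aI] [DecidableEq aO] [DecidableEq bI] [DecidableEq bO]
  [Nonempty aI] [Nonempty aO] [Nonempty bI] [Nonempty bO]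

/-- `_{A_O} W = (1_{A_O}/dim A_O) ⊗ tr_{A_O} W`, as an operator on the full space. -/
noncomputable def rAO (W : Matrix (aI × aO × bI × bO) (aI × aO × bI × bO) ℂ) :
    Matrix (aI × aO × bI × bO) (aI × aO × bI × bO) ℂ := fun i j =>
  (if i.2.1 = j.2.1 then ((Fintype.card aO : ℂ))⁻¹ else 0) *
    ∑ k : aO, W (i.1, k, i.2.2.1, i.2.2.2) (j.1, k, j.2.2.1, j.2.2.2)

/-- `_{B_O} W`. -/
noncomputable def rBO (W : Matrix (aI × aO × bI × bO) (aI × aO × bI × bO) ℂ) :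
    Matrix (aI × aO × bI × bO) (aI × aO × bI × bO) ℂ := fun i j =>
  (if i.2.2.2 = j.2.2.2 then ((Fintype.card bO : ℂ))⁻¹ else 0) *
    ∑ k : bO, W (i.1, i.2.1, i.2.2.1, k) (j.1, j.2.1, j.2.2.1, k)

/-- `_{A_O B_O} W`. -/
noncomputable def rAOBO (W : Matrix (aI × aO × bI × bO) (aI × aO × bI × bO) ℂ) :
    Matrix (aI × aO × bI × bO) (aI × aO × bI × bO) ℂ := fun i j =>
  (if i.2.1 = j.2.1 ∧ i.2.2.2 = j.2.2.2 then
      ((Fintype.card aO : ℂ) * (Fintype.card bO : ℂ))⁻¹ else 0) *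
    ∑ k : aO, ∑ l : bO, W (i.1, k, i.2.2.1, l) (j.1, k, j.2.2.1, l)

/-- `_{A_I A_O} W`. -/
noncomputable def rAIAO (W : Matrix (aI × aO × bI × bO) (aI × aO × bI × bO) ℂ) :
    Matrix (aI × aO × bI × bO) (aI × aO × bI × bO) ℂ := fun i j =>
  (if i.1 = j.1 ∧ i.2.1 = j.2.1 then
      ((Fintype.card aI : ℂ) * (Fintype.card aO : ℂ))⁻¹ else 0) *
    ∑ k : aI, ∑ l : aO, W (k, l, i.2.2.1, i.2.2.2) (k, l, j.2.2.1, j.2.2.2)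

/-- `_{B_I B_O} W`. -/
noncomputable def rBIBO (W : Matrix (aI × aO × bI × bO) (aI × aO × bI × bO) ℂ) :
    Matrix (aI × aO × bI × bO) (aI × aO × bI × bO) ℂ := fun i j =>
  (if i.2.2.1 = j.2.2.1 ∧ i.2.2.2 = j.2.2.2 then
      ((Fintype.card bI : ℂ) * (Fintype.card bO : ℂ))⁻¹ else 0) *
    ∑ k : bI, ∑ l : bO, W (i.1, i.2.1, k, l) (j.1, j.2.1, k, l)

/-- `_{A_I A_O B_O} W`. -/
noncomputable def rAIAOBO (W : Matrix (aI × aO × bI × bO) (aI × aO × bI × bO) ℂ) :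
    Matrix (aI × aO × bI × bO) (aI × aO × bI × bO) ℂ := fun i j =>
  (if i.1 = j.1 ∧ i.2.1 = j.2.1 ∧ i.2.2.2 = j.2.2.2 then
      ((Fintype.card aI : ℂ) * (Fintype.card aO : ℂ) * (Fintype.card bO : ℂ))⁻¹ else 0) *
    ∑ k : aI, ∑ l : aO, ∑ m : bO, W (k, l, i.2.2.1, m) (k, l, j.2.2.1, m)

/-- `_{A_O B_I B_O} W`. -/
noncomputable def rAOBIBO (W : Matrix (aI × aO × bI × bO) (aI × aO × bI × bO) ℂ) :
    Matrix (aI × aO × bI × bO) (aI × aO × bI × bO) ℂ := fun i j =>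
  (if i.2.1 = j.2.1 ∧ i.2.2.1 = j.2.2.1 ∧ i.2.2.2 = j.2.2.2 then
      ((Fintype.card aO : ℂ) * (Fintype.card bI : ℂ) * (Fintype.card bO : ℂ))⁻¹ else 0) *
    ∑ k : aO, ∑ l : bI, ∑ m : bO, W (i.1, k, l, m) (j.1, k, l, m)

/-- `W` is a process matrix. -/
structure IsProcessMatrix (W : Matrix (aI × aO × bI × bO) (aI × aO × bI × bO) ℂ) : Prop where
  posSemidef : W.PosSemidef
  condA : rAIAO W = rAIAOBO W
  condB : rBIBO W = rAOBIBO W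
  condAB : W = rBO W + rAO W - rAOBO W
  traceEq : W.trace = (Fintype.card aO : ℂ) * (Fintype.card bO : ℂ)

/-- Partial trace over `A_O`. -/
noncomputable def ptrAO (N : Matrix (aI × aO × bI × bO) (aI × aO × bI × bO) ℂ) :
    Matrix (aI × bI × bO) (aI × bI × bO) ℂ := fun i j =>
  ∑ k : aO, N (i.1, k, i.2.1, i.2.2) (j.1, k, j.2.1, j.2.2)

/-- Partial trace over `B_O`. -/
noncomputable def ptrBO (N : Matrix (aI × aO × bI × bO) (aI × aO × bI × bO) ℂ) :
    Matrix (aI × aO × bI) (aI × aO × bI) ℂ := fun i j =>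
  ∑ k : bO, N (i.1, i.2.1, i.2.2, k) (j.1, j.2.1, j.2.2, k)

/-- Partial trace over `A_O ⊗ B_O`. -/
noncomputable def ptrAOBO (N : Matrix (aI × aO × bI × bO) (aI × aO × bI × bO) ℂ) :
    Matrix (aI × bI) (aI × bI) ℂ := fun i j =>
  ∑ k : aO, ∑ l : bO, N (i.1, k, i.2, l) (j.1, k, j.2, l)

/-- `N` is the Choi matrix of a non-signaling channel. -/
structure MemNS (N : Matrix (aI × aO × bI × bO) (aI × aO × bI × bO) ℂ) : Prop where
  posSemidef : N.PosSemidef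
  trChannel : ptrAOBO N = 1
  nsA : ∀ i j : aI × bI × bO, ptrAO N i j =
    (if i.1 = j.1 then ((Fintype.card aI : ℂ))⁻¹ else 0) *
      ∑ m : aI, ptrAO N (m, i.2.1, i.2.2) (m, j.2.1, j.2.2)
  nsB : ∀ i j : aI × aO × bI, ptrBO N i j =
    (if i.2.2 = j.2.2 then ((Fintype.card bI : ℂ))⁻¹ else 0) *
      ∑ m : bI, ptrBO N (i.1, i.2.1, m) (j.1, j.2.1, m)

/-- The positive semidefinite square root (the former `Matrix.PosSemidef.sqrt`). -/
noncomputable def posSemidefSqrt {n : Type} [Fintype n] [DecidableEq n] {A : Matrix n n ℂ}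
    (hA : A.PosSemidef) : Matrix n n ℂ :=
  (hA.1.eigenvectorUnitary : Matrix n n ℂ) * Matrix.diagonal ((↑) ∘ (√·) ∘ hA.1.eigenvalues) *
    (star hA.1.eigenvectorUnitary : Matrix n n ℂ)

/-- `sup { ‖√N (W₀ - W₁) √N‖₁ : N ∈ NS }`. -/
noncomputable def discrBound (W0 W1 : Matrix (aI × aO × bI × bO) (aI × aO × bI × bO) ℂ) : ℝ :=
  sSup { x : ℝ | ∃ N : Matrix (aI × aO × bI × bO) (aI × aO × bI × bO) ℂ, ∃ hN : MemNS N,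
    x = traceNorm (posSemidefSqrt hN.posSemidef * (W0 - W1) * posSemidefSqrt hN.posSemidef) }

/-- The optimal probability of discriminating the process matrices `W0` and `W1`
over non-signaling strategies. -/
noncomputable def pSucc (W0 W1 : Matrix (aI × aO × bI × bO) (aI × aO × bI × bO) ℂ) : ℝ :=
  (1/2) * sSup { x : ℝ | ∃ S0 S1 : Matrix (aI × aO × bI × bO) (aI × aO × bI × bO) ℂ,
    S0.PosSemidef ∧ S1.PosSemidef ∧ MemNS (S0 + S1) ∧
    x = ((W0 * S0).trace + (W1 * S1).trace).re }

/-- `W` is a process matrix representing a quantum comb with causal order `A ≺ B`: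
`W = W' ⊗ 1_{B_O}` with `tr_{B_I} W' = W'' ⊗ 1_{A_O}`. -/
def MemCombAB (W : Matrix (aI × aO × bI × bO) (aI × aO × bI × bO) ℂ) : Prop :=
  IsProcessMatrix W ∧
  ∃ W' : Matrix (aI × aO × bI) (aI × aO × bI) ℂ,
    (∀ i j, W i j = (if i.2.2.2 = j.2.2.2 then 1 else 0) *
        W' (i.1, i.2.1, i.2.2.1) (j.1, j.2.1, j.2.2.1)) ∧
    ∃ W'' : Matrix aI aI ℂ, ∀ p q : aI × aO,
      (∑ k : bI, W' (p.1, p.2, k) (q.1, q.2, k)) = (if p.2 = q.2 then 1 else 0) * W'' p.1 q.1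

/-- `W` is a process matrix representing a quantum comb with causal order `B ≺ A`:
`W = W' ⊗ 1_{A_O}` (in the `A_O` slot) with `tr_{A_I} W' = W'' ⊗ 1_{B_O}`. -/
def MemCombBA (W : Matrix (aI × aO × bI × bO) (aI × aO × bI × bO) ℂ) : Prop :=
  IsProcessMatrix W ∧
  ∃ W' : Matrix (aI × bI × bO) (aI × bI × bO) ℂ,
    (∀ i j, W i j = (if i.2.1 = j.2.1 then 1 else 0) *
        W' (i.1, i.2.2.1, i.2.2.2) (j.1, j.2.2.1, j.2.2.2)) ∧
    ∃ W'' : Matrix bI bI ℂ, ∀ p q : bI × bO,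
      (∑ k : aI, W' (k, p.1, p.2) (k, q.1, q.2)) = (if p.2 = q.2 then 1 else 0) * W'' p.1 q.1

/-- `W` is a free process matrix: `W = ρ ⊗ 1_{A_O ⊗ B_O}` for a density operator `ρ`. -/
def MemFree (W : Matrix (aI × aO × bI × bO) (aI × aO × bI × bO) ℂ) : Prop :=
  ∃ ρ : Matrix (aI × bI) (aI × bI) ℂ, ρ.PosSemidef ∧ ρ.trace = 1 ∧
    ∀ i j, W i j = (if i.2.1 = j.2.1 ∧ i.2.2.2 = j.2.2.2 then 1 else 0) *
      ρ (i.1, i.2.2.1) (j.1, j.2.2.1)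

/-- `W` is a causally separable process matrix. -/
def MemSep (W : Matrix (aI × aO × bI × bO) (aI × aO × bI × bO) ℂ) : Prop :=
  ∃ p : ℝ, 0 ≤ p ∧ p ≤ 1 ∧ ∃ W1 W2 : Matrix (aI × aO × bI × bO) (aI × aO × bI × bO) ℂ,
    MemCombAB W1 ∧ MemCombBA W2 ∧ W = (p : ℂ) • W1 + ((1 - p : ℝ) : ℂ) • W2

/-- `(L0, L1)` is an adaptive tester for the causal order `A ≺ B`. -/
structure IsAdaptiveTester (L0 L1 : Matrix (aI × aO × bI × bO) (aI × aO × bI × bO) ℂ) :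
    Prop where
  posSemidef0 : L0.PosSemidef
  posSemidef1 : L1.PosSemidef
  comb : ∃ J : Matrix (aI × aO) (aI × aO) ℂ, J.PosSemidef ∧
    (∀ p q : aI, (∑ k : aO, J (p, k) (q, k)) = if p = q then 1 else 0) ∧
    ∀ i j : aI × aO × bI, ptrBO (L0 + L1) i j =
      (if i.2.2 = j.2.2 then 1 else 0) * J (i.1, i.2.1) (j.1, j.2.1)

/-- The optimal probability of discriminating `W0` and `W1` over adaptive testers. -/
noncomputable def pAdapt (W0 W1 : Matrix (aI × aO × bI × bO) (aI × aO × bI × bO) ℂ) : ℝ :=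
  (1/2) * sSup { x : ℝ | ∃ L0 L1 : Matrix (aI × aO × bI × bO) (aI × aO × bI × bO) ℂ,
    IsAdaptiveTester L0 L1 ∧ x = ((W0 * L0).trace + (W1 * L1).trace).re }

end ProcessMatrices

/-!
`Sᵢ` is the Kronecker product `tr_{B_O}(Lᵢ) ⊗ 1_{B_O}/dim B_O`, positive as a product of positive
matrices. By the comb condition `tr_{B_O}(L₀ + L₁) = 1_{B_I} ⊗ J`, the sum `S₀ + S₁` is the Choi
matrix of the channel that applies `J` to `A`, discards `B_I` and prepares the maximally mixed
state on `B_O`; such a channel is non-signaling because each party's output marginal depends on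
its own input only. Finally `tr((M ⊗ σ)(W' ⊗ 1)) = tr(M W') · tr σ` with `tr σ = 1`.
-/

namespace ProcessMatrices

open scoped Kronecker

section KronBO

variable {aI aO bI bO : Type}

def splitBO : aI × aO × bI × bO ≃ (aI × aO × bI) × bO where
  toFun i := ((i.1, i.2.1, i.2.2.1), i.2.2.2)
  invFun p := (p.1.1, p.1.2.1, p.1.2.2, p.2)
  left_inv _ := rfl
  right_inv _ := rfl

def kronBO (M : Matrix (aI × aO × bI) (aI × aO × bI) ℂ) (X : Matrix bO bO ℂ) :
    Matrix (aI × aO × bI × bO) (aI × aO × bI × bO) ℂ :=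
  (M ⊗ₖ X).submatrix splitBO splitBO

@[simp]
lemma kronBO_apply (M : Matrix (aI × aO × bI) (aI × aO × bI) ℂ) (X : Matrix bO bO ℂ)
    (i j : aI × aO × bI × bO) :
    kronBO M X i j = M (i.1, i.2.1, i.2.2.1) (j.1, j.2.1, j.2.2.1) * X i.2.2.2 j.2.2.2 :=
  rfl

lemma add_kronBO (M N : Matrix (aI × aO × bI) (aI × aO × bI) ℂ) (X : Matrix bO bO ℂ) :
    kronBO (M + N) X = kronBO M X + kronBO N X := by
  rw [kronBO, Matrix.add_kronecker]; rfl

variable [Fintype bO]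

lemma ptrBO_kronBO (M : Matrix (aI × aO × bI) (aI × aO × bI) ℂ) (X : Matrix bO bO ℂ) :
    ptrBO (kronBO M X) = X.trace • M := by
  ext i j
  simp [ptrBO, Matrix.trace, Finset.mul_sum, mul_comm]

variable [Fintype aI] [Fintype aO] [Fintype bI]

lemma posSemidef_kronBO {M : Matrix (aI × aO × bI) (aI × aO × bI) ℂ}
    {X : Matrix bO bO ℂ} (hM : M.PosSemidef) (hX : X.PosSemidef) : (kronBO M X).PosSemidef :=
  (hM.kronecker hX).submatrix _

lemma kronBO_mul_kronBO (M N : Matrix (aI × aO × bI) (aI × aO × bI) ℂ) (X Y : Matrix bO bO ℂ) :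
    kronBO M X * kronBO N Y = kronBO (M * N) (X * Y) := by
  rw [kronBO, kronBO, Matrix.submatrix_mul_equiv, ← Matrix.mul_kronecker_mul]; rfl

lemma trace_kronBO (M : Matrix (aI × aO × bI) (aI × aO × bI) ℂ) (X : Matrix bO bO ℂ) :
    (kronBO M X).trace = M.trace * X.trace := by
  rw [← Matrix.trace_kronecker]
  exact splitBO.sum_comp fun p => (M ⊗ₖ X) p p

end KronBO

section PartialTrace

variable {aI aO bI bO : Type} [Fintype bO]

lemma ptrBO_add (L L' : Matrix (aI × aO × bI × bO) (aI × aO × bI × bO) ℂ) :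
    ptrBO (L + L') = ptrBO L + ptrBO L' := by
  ext i j
  simp [ptrBO, Finset.sum_add_distrib]

lemma ptrBO_eq_sum_submatrix (L : Matrix (aI × aO × bI × bO) (aI × aO × bI × bO) ℂ) :
    ptrBO L = ∑ k : bO,
      L.submatrix (fun p => (p.1, p.2.1, p.2.2, k)) (fun p => (p.1, p.2.1, p.2.2, k)) := by
  ext i j
  simp [ptrBO, Matrix.sum_apply]

lemma posSemidef_ptrBO [Fintype aI] [Fintype aO] [Fintype bI]
    {L : Matrix (aI × aO × bI × bO) (aI × aO × bI × bO) ℂ} (hL : L.PosSemidef) :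
    (ptrBO L).PosSemidef := by
  rw [ptrBO_eq_sum_submatrix]
  exact Matrix.posSemidef_sum _ fun k _ => hL.submatrix _

end PartialTrace

section NonSignaling

variable {aI aO bI bO : Type} [Fintype aI] [Fintype aO] [Fintype bI] [Fintype bO]
  [DecidableEq aI] [DecidableEq bI] [Nonempty aI] [Nonempty bI]

lemma memNS_kronBO {J : Matrix (aI × aO) (aI × aO) ℂ}
    (hJ : ∀ p q : aI, (∑ k : aO, J (p, k) (q, k)) = if p = q then 1 else 0)
    {M : Matrix (aI × aO × bI) (aI × aO × bI) ℂ} (hM : M.PosSemidef)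
    (hMJ : ∀ p q : aI × aO × bI,
      M p q = (if p.2.2 = q.2.2 then 1 else 0) * J (p.1, p.2.1) (q.1, q.2.1))
    {σ : Matrix bO bO ℂ} (hσ : σ.PosSemidef) (hσ_trace : σ.trace = 1) :
    MemNS (kronBO M σ) := by
  have hptrBO : ptrBO (kronBO M σ) = M := by
    rw [ptrBO_kronBO, hσ_trace, one_smul]
  have hptrAO : ∀ (a a' : aI) (b b' : bI) (o o' : bO),
      ptrAO (kronBO M σ) (a, b, o) (a', b', o') =
        (if a = a' then 1 else 0) * (if b = b' then 1 else 0) * σ o o' := by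
    intro a a' b b' o o'
    simp only [ptrAO, kronBO_apply, hMJ, ← Finset.sum_mul]
    rw [mul_comm (ite _ _ _), ← hJ, Finset.mul_sum]
  refine ⟨posSemidef_kronBO hM hσ, ?_, fun i j => ?_, fun i j => ?_⟩
  · ext ⟨a, b⟩ ⟨a', b'⟩
    have hsum : ptrAOBO (kronBO M σ) (a, b) (a', b') =
        ∑ l, ptrAO (kronBO M σ) (a, b, l) (a', b', l) := by
      simp only [ptrAOBO, ptrAO]
      exact Finset.sum_comm
    rw [hsum]
    simp only [hptrAO]
    rw [← Finset.mul_sum, show ∑ l, σ l l = 1 from hσ_trace]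
    simp only [ite_zero_mul_ite_zero, mul_one, Matrix.one_apply, Prod.ext_iff]
  · obtain ⟨a, b, o⟩ := i
    obtain ⟨a', b', o'⟩ := j
    simp only [hptrAO]
    split_ifs <;> simp [Finset.sum_const]
  · obtain ⟨a, x, b⟩ := i
    obtain ⟨a', x', b'⟩ := j
    simp only [hptrBO, hMJ]
    split_ifs <;> simp [Finset.sum_const]

end NonSignaling

theorem statement5_general {aI aO bI bO : Type}
    [Fintype aI] [Fintype aO] [Fintype bI] [Fintype bO]
    [DecidableEq aI] [DecidableEq bI] [DecidableEq bO]
    [Nonempty aI] [Nonempty bI] [Nonempty bO]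
    (L0 L1 : Matrix (aI × aO × bI × bO) (aI × aO × bI × bO) ℂ)
    (h : IsAdaptiveTester L0 L1)
    (S0 S1 : Matrix (aI × aO × bI × bO) (aI × aO × bI × bO) ℂ)
    (hS0 : ∀ i j, S0 i j = (if i.2.2.2 = j.2.2.2 then ((Fintype.card bO : ℂ))⁻¹ else 0) *
        ptrBO L0 (i.1, i.2.1, i.2.2.1) (j.1, j.2.1, j.2.2.1))
    (hS1 : ∀ i j, S1 i j = (if i.2.2.2 = j.2.2.2 then ((Fintype.card bO : ℂ))⁻¹ else 0) *
        ptrBO L1 (i.1, i.2.1, i.2.2.1) (j.1, j.2.1, j.2.2.1)) :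
    S0.PosSemidef ∧ S1.PosSemidef ∧ MemNS (S0 + S1) ∧
    ∀ (W' : Matrix (aI × aO × bI) (aI × aO × bI) ℂ)
      (W : Matrix (aI × aO × bI × bO) (aI × aO × bI × bO) ℂ),
      (∀ i j, W i j = (if i.2.2.2 = j.2.2.2 then 1 else 0) *
          W' (i.1, i.2.1, i.2.2.1) (j.1, j.2.1, j.2.2.1)) →
      (S0 * W).trace = (ptrBO L0 * W').trace ∧ (S1 * W).trace = (ptrBO L1 * W').trace := by
  obtain ⟨J, -, hJ, hL⟩ := h.comb
  set σ : Matrix bO bO ℂ := (Fintype.card bO : ℂ)⁻¹ • 1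
  have hσ : σ.PosSemidef := Matrix.PosSemidef.one.smul (by positivity)
  have hσ_trace : σ.trace = 1 := by simp [σ, Matrix.trace_smul]
  obtain rfl : S0 = kronBO (ptrBO L0) σ :=
    Matrix.ext fun i j => by simp [hS0, σ, Matrix.one_apply, mul_comm]
  obtain rfl : S1 = kronBO (ptrBO L1) σ :=
    Matrix.ext fun i j => by simp [hS1, σ, Matrix.one_apply, mul_comm]
  refine ⟨posSemidef_kronBO (posSemidef_ptrBO h.posSemidef0) hσ,
    posSemidef_kronBO (posSemidef_ptrBO h.posSemidef1) hσ, ?_, fun W' W hW => ?_⟩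
  · rw [← add_kronBO, ← ptrBO_add]
    exact memNS_kronBO hJ (posSemidef_ptrBO (h.posSemidef0.add h.posSemidef1)) hL hσ hσ_trace
  · obtain rfl : W = kronBO W' 1 :=
      Matrix.ext fun i j => by simp [hW, Matrix.one_apply, mul_comm]
    simp only [kronBO_mul_kronBO, trace_kronBO, mul_one, hσ_trace, and_self]

/-- From an adaptive tester `(L0, L1)` for the order `A ≺ B`, the
operators `Sᵢ := tr_{B_O}(Lᵢ) ⊗ 1_{B_O}/dim B_O` form a valid non-signaling
discrimination strategy, and `tr(Sᵢ · (W' ⊗ 1_{B_O})) = tr(tr_{B_O}(Lᵢ) · W')`. -/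
theorem statement5 {aI aO bI bO : Type}
    [Fintype aI] [Fintype aO] [Fintype bI] [Fintype bO]
    [DecidableEq aI] [DecidableEq aO] [DecidableEq bI] [DecidableEq bO]
    [Nonempty aI] [Nonempty aO] [Nonempty bI] [Nonempty bO]
    (L0 L1 : Matrix (aI × aO × bI × bO) (aI × aO × bI × bO) ℂ)
    (h : IsAdaptiveTester L0 L1)
    (S0 S1 : Matrix (aI × aO × bI × bO) (aI × aO × bI × bO) ℂ)
    (hS0 : ∀ i j, S0 i j = (if i.2.2.2 = j.2.2.2 then ((Fintype.card bO : ℂ))⁻¹ else 0) *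
        ptrBO L0 (i.1, i.2.1, i.2.2.1) (j.1, j.2.1, j.2.2.1))
    (hS1 : ∀ i j, S1 i j = (if i.2.2.2 = j.2.2.2 then ((Fintype.card bO : ℂ))⁻¹ else 0) *
        ptrBO L1 (i.1, i.2.1, i.2.2.1) (j.1, j.2.1, j.2.2.1)) :
    S0.PosSemidef ∧ S1.PosSemidef ∧ MemNS (S0 + S1) ∧
    ∀ (W' : Matrix (aI × aO × bI) (aI × aO × bI) ℂ)
      (W : Matrix (aI × aO × bI × bO) (aI × aO × bI × bO) ℂ),
      (∀ i j, W i j = (if i.2.2.2 = j.2.2.2 then 1 else 0) *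
          W' (i.1, i.2.1, i.2.2.1) (j.1, j.2.1, j.2.2.1)) →
      (S0 * W).trace = (ptrBO L0 * W').trace ∧ (S1 * W).trace = (ptrBO L1 * W').trace :=
  statement5_general L0 L1 h S0 S1 hS0 hS1

end ProcessMatrices
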